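/- Let R be a ℚ-algebra. Any homomorphism of group functors φ from the additive group functor 𝔪 (where 𝔪(R') = u·R'[[u]] + t·R'((u))[[t]] for R-algebras R') to the multiplicative group 𝔾ₘ, given by a natural transformation of functors of points, is continuous on R-points: there exist i, j ∈ ℕ such that φ vanishes on u^j R[[u,t]] + t^i R((u))[[t]]. -/

import Mathlib

/-!
Suppose no `𝔲_{n,n}(R)` lies in the kernel of `φ`, and pick `xₙ ∈ 𝔲_{n,n}(R)` with `φ(xₙ) ≠ 1`.
Since `xₙ → 0`, the series `Y = Σₙ Xₙ xₙ` makes sense in `𝔪(R[X₀, X₁, …])`. The unit `φ(Y)` is a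
polynomial, so it misses some variable `Xₘ`. By naturality, specialising `Xₘ ↦ 1` and all other
variables to `0` gives `φ(xₘ)`, while specialising all variables to `0` gives `φ(0) = 1`; both
specialisations agree on a polynomial not involving `Xₘ`, a contradiction.
-/

noncomputable section

namespace CC

universe u

variable {R : Type u} [CommRing R]

/-- Coefficientwise map of Laurent series along a ring homomorphism. -/
def mapLS {S : Type*} [CommRing S] (ψ : R →+* S) (x : LaurentSeries R) : LaurentSeries S where
  coeff n := ψ (x.coeff n)
  isPWO_support' := by
    refine x.isPWO_support'.mono ?_
    intro n hn
    have h1 : ψ (x.coeff n) ≠ 0 := hn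
    exact fun h => h1 (by rw [h, map_zero])

lemma mapLS_zero {S : Type*} [CommRing S] (ψ : R →+* S) :
    mapLS ψ (0 : LaurentSeries R) = 0 := by
  ext n
  exact map_zero ψ

/-- Coefficientwise map of iterated Laurent series along a ring homomorphism. -/
def mapLL {S : Type*} [CommRing S] (ψ : R →+* S) (x : LaurentSeries (LaurentSeries R)) :
    LaurentSeries (LaurentSeries S) where
  coeff s := mapLS ψ (x.coeff s)
  isPWO_support' := by
    refine x.isPWO_support'.mono ?_
    intro s hs
    have h1 : mapLS ψ (x.coeff s) ≠ 0 := hs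
    exact fun h => h1 (by rw [h, mapLS_zero])

/-- `x ∈ 𝔪(S) = u·S[[u]] + t·S((u))[[t]]` inside `S((u))((t))`. -/
def InM {S : Type*} [CommRing S] (x : LaurentSeries (LaurentSeries S)) : Prop :=
  (∀ s : ℤ, s < 0 → x.coeff s = 0) ∧ (∀ w : ℤ, w ≤ 0 → (x.coeff 0).coeff w = 0)

/-- `x ∈ 𝔲_{i,j}(S) = u^j·S[[u,t]] + t^i·S((u))[[t]]`. -/
def MemUij {S : Type*} [CommRing S] (i j : ℕ) (x : LaurentSeries (LaurentSeries S)) : Prop :=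
  (∀ s : ℤ, s < 0 → x.coeff s = 0) ∧
  (∀ s : ℤ, 0 ≤ s → s < (i : ℤ) → ∀ w : ℤ, w < (j : ℤ) → (x.coeff s).coeff w = 0)

open MvPolynomial

lemma inM_zero {S : Type*} [CommRing S] : InM (0 : LaurentSeries (LaurentSeries S)) :=
  ⟨fun _ _ => rfl, fun _ _ => rfl⟩

lemma MemUij.coeff_coeff_eq_zero {S : Type*} [CommRing S] {i j : ℕ}
    {y : LaurentSeries (LaurentSeries S)} (hy : MemUij i j y) {s w : ℤ} (hs : s < i)
    (hw : w < j) : (y.coeff s).coeff w = 0 := by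
  rcases lt_or_ge s 0 with hs0 | hs0
  · rw [hy.1 s hs0]
    rfl
  · exact hy.2 s hs0 hs w hw

lemma aeval_single_one_eq_aeval_zero {σ S : Type*} [CommRing S] [DecidableEq σ]
    {p : MvPolynomial σ S} {m : σ} (hm : m ∉ p.vars) :
    aeval (Pi.single m (1 : S)) p = aeval (0 : σ → S) p :=
  eval₂Hom_congr' rfl
    (fun _ hi _ => Pi.single_eq_of_ne (ne_of_mem_of_not_mem hi hm) 1) rfl

section UniversalSum

variable (x : ℕ → LaurentSeries (LaurentSeries R))

/-- The `(s, w)` coefficient of `Σₙ Xₙ xₙ`; for `xₙ ∈ 𝔲_{n,n}` only the terms with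
`n ≤ max s w` can contribute. -/
def universalSumCoeff (s w : ℤ) : MvPolynomial ℕ R :=
  ∑ n ∈ Finset.range ((max s w).toNat + 1), X n * C (((x n).coeff s).coeff w)

lemma universalSumCoeff_eq_zero {s w : ℤ} (h : ∀ n, ((x n).coeff s).coeff w = 0) :
    universalSumCoeff x s w = 0 :=
  Finset.sum_eq_zero fun n _ => by rw [h n, map_zero, mul_zero]

variable {x} (hx : ∀ n, MemUij n n (x n))
include hx

lemma isPWO_support_universalSumCoeff (s : ℤ) :
    (Function.support (universalSumCoeff x s)).IsPWO := by
  refine (((Finset.range (s.toNat + 1)).isPWO_bUnion.2 fun n _ =>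
    ((x n).coeff s).isPWO_support).union (bddBelow_Ici (a := s + 1)).isWF.isPWO).mono ?_
  intro w hw
  obtain ⟨n, -, hn⟩ := Finset.exists_ne_zero_of_sum_ne_zero hw
  have hxn : ((x n).coeff s).coeff w ≠ 0 := fun h => hn (by rw [h, map_zero, mul_zero])
  by_cases hns : n < s.toNat + 1
  · exact Or.inl (Set.mem_biUnion (Finset.mem_range.2 hns) hxn)
  · have hwn : (n : ℤ) ≤ w := by
      by_contra hwn
      exact hxn ((hx n).coeff_coeff_eq_zero (by omega) (by omega))
    exact Or.inr (show s + 1 ≤ w by omega)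

def universalSum : LaurentSeries (LaurentSeries (MvPolynomial ℕ R)) where
  coeff s := ⟨universalSumCoeff x s, isPWO_support_universalSumCoeff hx s⟩
  isPWO_support' := by
    refine (bddBelow_Ici (a := (0 : ℤ))).isWF.isPWO.mono fun s hs => ?_
    by_contra hs0
    exact hs (HahnSeries.ext (funext fun w =>
      universalSumCoeff_eq_zero x fun n => by rw [(hx n).1 s (by simpa using hs0)]; rfl))

lemma inM_universalSum (hxM : ∀ n, InM (x n)) : InM (universalSum hx) :=
  ⟨fun s hs => HahnSeries.ext (funext fun w =>
      universalSumCoeff_eq_zero x fun n => by rw [(hx n).1 s hs]; rfl),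
    fun w hw => universalSumCoeff_eq_zero x fun n => (hxM n).2 w hw⟩

lemma mapLL_aeval_single_one_universalSum (m : ℕ) :
    mapLL (aeval (Pi.single m (1 : R))).toRingHom (universalSum hx) = x m := by
  ext s w
  change aeval (Pi.single m (1 : R)) (universalSumCoeff x s w) = _
  simp only [universalSumCoeff, map_sum, map_mul, aeval_X, aeval_C, Algebra.algebraMap_self,
    RingHom.id_apply]
  rw [Finset.sum_eq_single m (fun n _ hn => by rw [Pi.single_eq_of_ne hn, zero_mul])]
  · rw [Pi.single_eq_same, one_mul]
  · intro hm
    have hm' : max s w < m := by rw [Finset.mem_range] at hm; omega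
    rw [(hx m).coeff_coeff_eq_zero (by omega) (by omega), mul_zero]

lemma mapLL_aeval_zero_universalSum :
    mapLL (aeval (0 : ℕ → R)).toRingHom (universalSum hx) = 0 := by
  ext s w
  change aeval (0 : ℕ → R) (universalSumCoeff x s w) = 0
  simp [universalSumCoeff]

end UniversalSum

/-- **Continuity of homomorphisms of group ind-schemes `𝔪 → 𝔾ₘ` (Prop. `lemma-main` (1)).**
Let `R` be a commutative ring and let `φ : 𝔪 → 𝔾ₘ` be a homomorphism of group functors over
`R` (i.e. a natural, in the `R`-algebra `S`, family of additive-to-multiplicative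
homomorphisms `𝔪(S) → Sˣ`).  Then `φ`, restricted to `R`-points, is continuous for the
topology on `𝔪(R)` with basic open subgroups `𝔲_{i,j}(R)` and the discrete topology on `R*`:
there are `i, j` such that `φ` is trivial on `𝔲_{i,j}(R)`. -/
theorem hom_m_to_Gm_continuous
    (φ : ∀ (S : Type u) [CommRing S] [Algebra R S],
      { x : LaurentSeries (LaurentSeries S) // InM x } → Sˣ)
    (hhom : ∀ (S : Type u) [CommRing S] [Algebra R S]
      (x y z : { x : LaurentSeries (LaurentSeries S) // InM x }),
      (z : LaurentSeries (LaurentSeries S)) =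
        (x : LaurentSeries (LaurentSeries S)) + (y : LaurentSeries (LaurentSeries S)) →
      φ S z = φ S x * φ S y)
    (hnat : ∀ (S₁ S₂ : Type u) [CommRing S₁] [CommRing S₂] [Algebra R S₁] [Algebra R S₂]
      (ψ : S₁ →ₐ[R] S₂)
      (x : { x : LaurentSeries (LaurentSeries S₁) // InM x })
      (y : { x : LaurentSeries (LaurentSeries S₂) // InM x }),
      (y : LaurentSeries (LaurentSeries S₂)) =
        mapLL ψ.toRingHom (x : LaurentSeries (LaurentSeries S₁)) →
      φ S₂ y = Units.map ψ.toRingHom.toMonoidHom (φ S₁ x)) :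
    ∃ i j : ℕ, ∀ x : { x : LaurentSeries (LaurentSeries R) // InM x },
      MemUij i j (x : LaurentSeries (LaurentSeries R)) → φ R x = 1 := by
  by_contra! hcon
  choose x hxU hx1 using fun n : ℕ => hcon n n
  let zero : { y : LaurentSeries (LaurentSeries R) // InM y } := ⟨0, inM_zero⟩
  have hφ_zero : φ R zero = 1 :=
    left_eq_mul.mp (hhom R zero zero zero (add_zero 0).symm)
  let Y : { y : LaurentSeries (LaurentSeries (MvPolynomial ℕ R)) // InM y } :=
    ⟨universalSum hxU, inM_universalSum hxU fun n => (x n).2⟩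
  obtain ⟨m, hm⟩ := Infinite.exists_notMem_finset (φ _ Y : MvPolynomial ℕ R).vars
  apply hx1 m
  rw [← hφ_zero, hnat _ _ _ Y (x m) (mapLL_aeval_single_one_universalSum hxU m).symm,
    hnat _ _ _ Y zero (mapLL_aeval_zero_universalSum hxU).symm]
  exact Units.ext (aeval_single_one_eq_aeval_zero hm)

end CC
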